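/- Let a ≠ 0, let s be an integer, and let x, y ∈ F with Δ := x² − (d/4)y² ≠ 0; put τ := [[x + by/2, cy], [−ay, x − by/2]] (an element of T(F), with det τ = Δ) and g := τ·diag(ϖ^s, 1). Then: (i) if x − by/2 ∈ ϖ^{−l}·o^× for some integer l ≥ 0 and a·ϖ^{s+l}·y ∈ o, then g = [[Δ·ϖ^s/(x − by/2), ϖ^{−l}·c·y/(x − by/2)], [0, ϖ^{−l}]] · [[1, 0], [−a·ϖ^{s+l}·y, ϖ^{l}·(x − by/2)]], and the second factor lies in GL₂(o); (ii) if x − by/2 ∈ ϖ^{−l}·o^× for some integer l ≥ 0 and a·ϖ^{s+l}·y ∉ o, then g = [[Δ/(a·y), −ϖ^s·(x + by/2)], [0, a·ϖ^s·y]] · [[0, 1], [−1, (x − by/2)/(a·ϖ^s·y)]], and the second factor lies in GL₂(o); (iii) if x − by/2 ∈ p, y ≠ 0, and (x − by/2)/(ϖ^s·a·y) ∈ o, then g = [[Δ/(a·y), −ϖ^s·(x + by/2)], [0, ϖ^s·a·y]] · [[0, 1], [−1, (x − by/2)/(ϖ^s·a·y)]], and the second factor lies in GL₂(o); (iv) if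 x − by/2 ∈ p and (x − by/2)/(ϖ^s·a·y) ∉ o, then g = [[Δ·ϖ^s/(x − by/2), c·y], [0, x − by/2]] · [[1, 0], [−a·ϖ^s·y/(x − by/2), 1]], and the second factor lies in GL₂(o). In each case the first factor is an invertible upper-triangular matrix. -/

import Mathlib

open Matrix

noncomputable section

abbrev Zm0 : Type := WithZero (Multiplicative ℤ)

/-- `ev n` is the value (in `ℤₘ₀ = WithZero (Multiplicative ℤ)`) of an element of additive
valuation `n`; thus `x ∈ 𝔭^n` iff `v x ≤ ev n`, `x ∈ 𝔬` iff `v x ≤ ev 0`, `x ∈ 𝔬^×` iff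
`v x = ev 0`, `x ∈ ϖ^{-l}·𝔬^×` iff `v x = ev (-l)`, and `x ∈ 𝔭` iff `v x ≤ ev 1`. -/
def ev (n : ℤ) : Zm0 := ((Multiplicative.ofAdd (-n) : Multiplicative ℤ) : Zm0)

variable {F : Type*} [Field F]

/-- GL₂(𝔬) : integral entries and unit determinant -/
def GL2O (v : Valuation F Zm0) : Set (Matrix (Fin 2) (Fin 2) F) :=
  {g | (∀ i j, v (g i j) ≤ ev 0) ∧ v g.det = ev 0}

/-- B(F): invertible upper triangular matrices -/
def BF (F : Type*) [Field F] : Set (Matrix (Fin 2) (Fin 2) F) :=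
  {g | g 1 0 = 0 ∧ g.det ≠ 0}

/-!
Write `u = x - by/2` and `w = x + by/2`, so that `Δ = wu + acy²` and
`g = [[wϖ^s, cy], [-ayϖ^s, u]]`. Each factorization is a polynomial identity in the entries once
`u` (lower unipotent factors) or `ayϖ^s` (Weyl-element factors) is invertible. The right-hand
factors have unit determinant, and the case hypotheses make their other entries integral: in (ii)
because `v u = v ϖ^(-l) < v (ayϖ^s)`, in (iv) because `v (ayϖ^s / u) = (v (u / ϖ^s ay))⁻¹`.
-/
lemma ev_zero : ev 0 = 1 := rfl

lemma ev_ne_zero (n : ℤ) : ev n ≠ 0 := WithZero.coe_ne_zero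

lemma ev_mul (m n : ℤ) : ev m * ev n = ev (m + n) := by
  rw [ev, ev, ev, ← WithZero.coe_mul, ← ofAdd_add, neg_add]

lemma Valuation.map_zpow_of_eq_ev_one (v : Valuation F Zm0) {ϖ : F} (hϖ : v ϖ = ev 1) (n : ℤ) :
    v (ϖ ^ n) = ev n := by
  rw [map_zpow₀, hϖ, ev, ev, ← WithZero.coe_zpow, ← ofAdd_zsmul, smul_neg, smul_eq_mul, mul_one]

lemma ne_zero_of_valuation_eq_ev {v : Valuation F Zm0} {x : F} {n : ℤ} (h : v x = ev n) :
    x ≠ 0 := by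
  rintro rfl
  exact ev_ne_zero n (by rw [← h, map_zero])

lemma ne_zero_of_not_valuation_le {v : Valuation F Zm0} {x : F} {γ : Zm0} (h : ¬ v x ≤ γ) :
    x ≠ 0 := by
  rintro rfl
  exact h (by rw [map_zero]; exact zero_le)

section Factorizations

variable {K : Type*} [Field K] {a c y w u P Δ : K}

lemma mul_diagonal_eq_upper_mul_lower_zpow {ϖ : K} (hϖ : ϖ ≠ 0) (s l : ℤ) (hu : u ≠ 0)
    (hΔ : Δ = w * u + a * c * y ^ 2) :
    !![w, c * y; -(a * y), u] * !![ϖ ^ s, 0; 0, 1]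
      = !![Δ * ϖ ^ s / u, ϖ ^ (-l) * c * y / u; 0, ϖ ^ (-l)]
        * !![1, 0; -(a * ϖ ^ (s + l) * y), ϖ ^ l * u] := by
  have hϖl : ϖ ^ l ≠ 0 := zpow_ne_zero l hϖ
  rw [zpow_add₀ hϖ, _root_.zpow_neg]
  ext i j
  fin_cases i <;> fin_cases j <;> simp [Matrix.mul_apply, hΔ]
  all_goals field_simp
  all_goals ring

lemma mul_diagonal_eq_upper_mul_lower (hu : u ≠ 0) (hΔ : Δ = w * u + a * c * y ^ 2) :
    !![w, c * y; -(a * y), u] * !![P, 0; 0, 1]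
      = !![Δ * P / u, c * y; 0, u] * !![1, 0; -(a * P * y / u), 1] := by
  ext i j
  fin_cases i <;> fin_cases j <;> simp [Matrix.mul_apply, hΔ]
  all_goals field_simp
  all_goals ring

lemma mul_diagonal_eq_upper_mul_weyl {z : K} (hz : a * P * y = z) (hz0 : z ≠ 0)
    (hΔ : Δ = w * u + a * c * y ^ 2) :
    !![w, c * y; -(a * y), u] * !![P, 0; 0, 1]
      = !![Δ / (a * y), -(P * w); 0, z] * !![0, 1; -1, u / z] := by
  subst hz
  have ha : a ≠ 0 := by rintro rfl; simp at hz0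
  have hP : P ≠ 0 := by rintro rfl; simp at hz0
  have hy : y ≠ 0 := by rintro rfl; simp at hz0
  ext i j
  fin_cases i <;> fin_cases j <;> simp [Matrix.mul_apply, hΔ]
  all_goals field_simp
  all_goals ring

end Factorizations

lemma mem_GL2O (v : Valuation F Zm0) {A B C D : F}
    (hA : v A ≤ ev 0) (hB : v B ≤ ev 0) (hC : v C ≤ ev 0) (hD : v D ≤ ev 0)
    (hdet : v (A * D - B * C) = ev 0) : !![A, B; C, D] ∈ GL2O v := by
  refine ⟨fun i j => ?_, by rwa [Matrix.det_fin_two_of]⟩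
  fin_cases i <;> fin_cases j <;> simpa

lemma lower_mem_GL2O (v : Valuation F Zm0) {C D : F} (hC : v C ≤ ev 0) (hD : v D = ev 0) :
    !![1, 0; C, D] ∈ GL2O v :=
  mem_GL2O v (by simp [ev_zero]) (by simp) hC hD.le (by simpa using hD)

lemma weyl_mul_mem_GL2O (v : Valuation F Zm0) {B : F} (hB : v B ≤ ev 0) :
    !![0, 1; -1, B] ∈ GL2O v :=
  mem_GL2O v (by simp) (by simp [ev_zero]) (by simp [ev_zero]) hB (by simp [ev_zero])

lemma upper_mem_BF {A B D : F} (h : A * D ≠ 0) : !![A, B; 0, D] ∈ BF F :=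
  ⟨by simp, by simpa [Matrix.det_fin_two_of] using h⟩

lemma valuation_div_le_one_of_not_le_one (v : Valuation F Zm0) {x z : F}
    (h : ¬ v (z / x) ≤ ev 0) : v (x / z) ≤ ev 0 := by
  have hzx : z / x ≠ 0 := ne_zero_of_not_valuation_le h
  rw [ev_zero, not_le, v.one_lt_val_iff hzx, inv_div] at h
  exact h.le

lemma valuation_div_le_one_of_not_le_one_mul_zpow (v : Valuation F Zm0) {ϖ : F}
    (hϖ : v ϖ = ev 1) {l : ℤ} {u z : F} (hu : v u = ev (-l)) (hz : ¬ v (z * ϖ ^ l) ≤ ev 0) :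
    v (u / z) ≤ ev 0 := by
  have hz0 : v z ≠ 0 := by
    rw [v.ne_zero_iff]; exact left_ne_zero_of_mul (ne_zero_of_not_valuation_le hz)
  rw [map_mul, v.map_zpow_of_eq_ev_one hϖ, ev_zero, not_le] at hz
  have hinv : ev (-l) = (ev l)⁻¹ := eq_inv_of_mul_eq_one_left (by rw [ev_mul, neg_add_cancel]; rfl)
  rw [map_div₀, hu, ev_zero, div_le_one₀ (zero_lt_iff.mpr hz0), hinv]
  exact ((inv_lt_iff_one_lt_mul₀ (zero_lt_iff.mpr (ev_ne_zero l))).mpr hz).le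

theorem stmt2_general [CharZero F]
    (v : Valuation F Zm0) (ϖ : F) (hϖ : v ϖ = ev 1)
    (a b c : F)
    (ha0 : a ≠ 0)
    (s : ℤ) (x y : F)
    (Δ : F) (hΔdef : Δ = x ^ 2 - ((b ^ 2 - 4 * (a * c)) / 4) * y ^ 2) (hΔ : Δ ≠ 0)
    (g : Matrix (Fin 2) (Fin 2) F)
    (hg : g = !![x + b * y / 2, c * y; -(a * y), x - b * y / 2] * !![ϖ ^ s, 0; 0, 1]) :
    -- case (i)
    ((∀ l : ℕ, v (x - b * y / 2) = ev (-(l : ℤ)) → v (a * ϖ ^ (s + (l : ℤ)) * y) ≤ ev 0 →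
      g = !![Δ * ϖ ^ s / (x - b * y / 2), ϖ ^ (-(l : ℤ)) * c * y / (x - b * y / 2);
             0, ϖ ^ (-(l : ℤ))]
          * !![1, 0; -(a * ϖ ^ (s + (l : ℤ)) * y), ϖ ^ (l : ℤ) * (x - b * y / 2)]
        ∧ !![1, 0; -(a * ϖ ^ (s + (l : ℤ)) * y), ϖ ^ (l : ℤ) * (x - b * y / 2)] ∈ GL2O v
        ∧ !![Δ * ϖ ^ s / (x - b * y / 2), ϖ ^ (-(l : ℤ)) * c * y / (x - b * y / 2);
             0, ϖ ^ (-(l : ℤ))] ∈ BF F))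
    -- case (ii)
    ∧ (∀ l : ℕ, v (x - b * y / 2) = ev (-(l : ℤ)) → ¬ v (a * ϖ ^ (s + (l : ℤ)) * y) ≤ ev 0 →
      g = !![Δ / (a * y), -(ϖ ^ s * (x + b * y / 2)); 0, a * ϖ ^ s * y]
          * !![0, 1; -1, (x - b * y / 2) / (a * ϖ ^ s * y)]
        ∧ !![0, 1; -1, (x - b * y / 2) / (a * ϖ ^ s * y)] ∈ GL2O v
        ∧ !![Δ / (a * y), -(ϖ ^ s * (x + b * y / 2)); 0, a * ϖ ^ s * y] ∈ BF F)
    -- case (iii)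
    ∧ (v (x - b * y / 2) ≤ ev 1 → y ≠ 0 → v ((x - b * y / 2) / (ϖ ^ s * a * y)) ≤ ev 0 →
      g = !![Δ / (a * y), -(ϖ ^ s * (x + b * y / 2)); 0, ϖ ^ s * a * y]
          * !![0, 1; -1, (x - b * y / 2) / (ϖ ^ s * a * y)]
        ∧ !![0, 1; -1, (x - b * y / 2) / (ϖ ^ s * a * y)] ∈ GL2O v
        ∧ !![Δ / (a * y), -(ϖ ^ s * (x + b * y / 2)); 0, ϖ ^ s * a * y] ∈ BF F)
    -- case (iv)
    ∧ (v (x - b * y / 2) ≤ ev 1 → ¬ v ((x - b * y / 2) / (ϖ ^ s * a * y)) ≤ ev 0 →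
      g = !![Δ * ϖ ^ s / (x - b * y / 2), c * y; 0, x - b * y / 2]
          * !![1, 0; -(a * ϖ ^ s * y / (x - b * y / 2)), 1]
        ∧ !![1, 0; -(a * ϖ ^ s * y / (x - b * y / 2)), 1] ∈ GL2O v
        ∧ !![Δ * ϖ ^ s / (x - b * y / 2), c * y; 0, x - b * y / 2] ∈ BF F) := by
  have hϖ0 : ϖ ≠ 0 := ne_zero_of_valuation_eq_ev hϖ
  have hϖs : ϖ ^ s ≠ 0 := zpow_ne_zero s hϖ0
  have hΔ' : Δ = (x + b * y / 2) * (x - b * y / 2) + a * c * y ^ 2 := by rw [hΔdef]; ring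
  subst hg
  refine ⟨fun l hu hint => ?_, fun l hu hint => ?_, fun _ hy hint => ?_, fun _ hint => ?_⟩
  · have hu0 := ne_zero_of_valuation_eq_ev hu
    refine ⟨mul_diagonal_eq_upper_mul_lower_zpow hϖ0 _ _ hu0 hΔ',
      lower_mem_GL2O v (by rwa [Valuation.map_neg]) ?_,
      upper_mem_BF (mul_ne_zero (div_ne_zero (mul_ne_zero hΔ hϖs) hu0) (zpow_ne_zero _ hϖ0))⟩
    rw [map_mul, v.map_zpow_of_eq_ev_one hϖ, hu, ev_mul, add_neg_cancel]
  · have hy := right_ne_zero_of_mul (ne_zero_of_not_valuation_le hint)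
    have hz : a * ϖ ^ s * y ≠ 0 := by simp [ha0, hϖs, hy]
    refine ⟨mul_diagonal_eq_upper_mul_weyl (by ring) hz hΔ',
      weyl_mul_mem_GL2O v (valuation_div_le_one_of_not_le_one_mul_zpow v hϖ hu ?_),
      upper_mem_BF (mul_ne_zero (div_ne_zero hΔ (mul_ne_zero ha0 hy)) hz)⟩
    rwa [zpow_add₀ hϖ0, show a * (ϖ ^ s * ϖ ^ (l : ℤ)) * y = a * ϖ ^ s * y * ϖ ^ (l : ℤ) by ring]
      at hint
  · have hz : ϖ ^ s * a * y ≠ 0 := by simp [ha0, hϖs, hy]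
    exact ⟨mul_diagonal_eq_upper_mul_weyl (by ring) hz hΔ',
      weyl_mul_mem_GL2O v hint,
      upper_mem_BF (mul_ne_zero (div_ne_zero hΔ (mul_ne_zero ha0 hy)) hz)⟩
  · have hu0 := (div_ne_zero_iff.mp (ne_zero_of_not_valuation_le hint)).1
    refine ⟨mul_diagonal_eq_upper_mul_lower hu0 hΔ',
      lower_mem_GL2O v ?_ (by simp [ev_zero]),
      upper_mem_BF (mul_ne_zero (div_ne_zero (mul_ne_zero hΔ hϖs) hu0) hu0)⟩
    rw [Valuation.map_neg, show a * ϖ ^ s * y = ϖ ^ s * a * y by ring]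
    exact valuation_div_le_one_of_not_le_one v hint

/-- decomposition of g = τ·diag(ϖ^s, 1) as (invertible upper triangular)·(element
of GL₂(𝔬)), in each of the four cases, where τ = [[x + by/2, cy],[−ay, x − by/2]] and
Δ = det τ = x² − (d/4)y², d = b² − 4ac. -/
theorem stmt2 [CharZero F]
    (v : Valuation F Zm0) (ϖ : F) (hϖ : v ϖ = ev 1)
    (a b c : F)
    (hao : v a ≤ ev 0) (hbo : v b ≤ ev 0) (hc : v c = ev 0)
    (hd0 : b ^ 2 - 4 * (a * c) ≠ 0)
    (ha0 : a ≠ 0)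
    (s : ℤ) (x y : F)
    (Δ : F) (hΔdef : Δ = x ^ 2 - ((b ^ 2 - 4 * (a * c)) / 4) * y ^ 2) (hΔ : Δ ≠ 0)
    (g : Matrix (Fin 2) (Fin 2) F)
    (hg : g = !![x + b * y / 2, c * y; -(a * y), x - b * y / 2] * !![ϖ ^ s, 0; 0, 1]) :
    -- case (i)
    ((∀ l : ℕ, v (x - b * y / 2) = ev (-(l : ℤ)) → v (a * ϖ ^ (s + (l : ℤ)) * y) ≤ ev 0 →
      g = !![Δ * ϖ ^ s / (x - b * y / 2), ϖ ^ (-(l : ℤ)) * c * y / (x - b * y / 2);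
             0, ϖ ^ (-(l : ℤ))]
          * !![1, 0; -(a * ϖ ^ (s + (l : ℤ)) * y), ϖ ^ (l : ℤ) * (x - b * y / 2)]
        ∧ !![1, 0; -(a * ϖ ^ (s + (l : ℤ)) * y), ϖ ^ (l : ℤ) * (x - b * y / 2)] ∈ GL2O v
        ∧ !![Δ * ϖ ^ s / (x - b * y / 2), ϖ ^ (-(l : ℤ)) * c * y / (x - b * y / 2);
             0, ϖ ^ (-(l : ℤ))] ∈ BF F))
    -- case (ii)
    ∧ (∀ l : ℕ, v (x - b * y / 2) = ev (-(l : ℤ)) → ¬ v (a * ϖ ^ (s + (l : ℤ)) * y) ≤ ev 0 →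
      g = !![Δ / (a * y), -(ϖ ^ s * (x + b * y / 2)); 0, a * ϖ ^ s * y]
          * !![0, 1; -1, (x - b * y / 2) / (a * ϖ ^ s * y)]
        ∧ !![0, 1; -1, (x - b * y / 2) / (a * ϖ ^ s * y)] ∈ GL2O v
        ∧ !![Δ / (a * y), -(ϖ ^ s * (x + b * y / 2)); 0, a * ϖ ^ s * y] ∈ BF F)
    -- case (iii)
    ∧ (v (x - b * y / 2) ≤ ev 1 → y ≠ 0 → v ((x - b * y / 2) / (ϖ ^ s * a * y)) ≤ ev 0 →
      g = !![Δ / (a * y), -(ϖ ^ s * (x + b * y / 2)); 0, ϖ ^ s * a * y]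
          * !![0, 1; -1, (x - b * y / 2) / (ϖ ^ s * a * y)]
        ∧ !![0, 1; -1, (x - b * y / 2) / (ϖ ^ s * a * y)] ∈ GL2O v
        ∧ !![Δ / (a * y), -(ϖ ^ s * (x + b * y / 2)); 0, ϖ ^ s * a * y] ∈ BF F)
    -- case (iv)
    ∧ (v (x - b * y / 2) ≤ ev 1 → ¬ v ((x - b * y / 2) / (ϖ ^ s * a * y)) ≤ ev 0 →
      g = !![Δ * ϖ ^ s / (x - b * y / 2), c * y; 0, x - b * y / 2]
          * !![1, 0; -(a * ϖ ^ s * y / (x - b * y / 2)), 1]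
        ∧ !![1, 0; -(a * ϖ ^ s * y / (x - b * y / 2)), 1] ∈ GL2O v
        ∧ !![Δ * ϖ ^ s / (x - b * y / 2), c * y; 0, x - b * y / 2] ∈ BF F) :=
  stmt2_general v ϖ hϖ a b c ha0 s x y Δ hΔdef hΔ g hg
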